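/- Let H = (f, φ; g, ψ) with entries in L²(𝕋) and suppose R_H is bounded on L²(𝕋). Then R_H = 0 if and only if f = 0, ψ = 0, and both g and φ̄ belong to H². -/

import Mathlib

open MeasureTheory AddCircle Filter Topology
open scoped ENNReal

noncomputable section

namespace GSIO

instance : Fact (0 < 2 * Real.pi) := ⟨by positivity⟩

/-- The unit circle, realized as `ℝ / 2πℤ`. -/
abbrev 𝕋 : Type := AddCircle (2 * Real.pi)

/-- Normalized Lebesgue (Haar) measure on the circle. -/
abbrev μ : Measure 𝕋 := @haarAddCircle (2 * Real.pi) _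

/-- `L²(𝕋)`. -/
abbrev L2 : Type := Lp ℂ 2 μ

/-- The embedding `𝕋 ⊆ ℂ`, `t ↦ e^{it}`. -/
def e : C(𝕋, ℂ) := ⟨fun t => (toCircle t : ℂ), continuous_induced_dom.comp continuous_toCircle⟩

/-- The Hardy space `H²`: the closed linear span of `{zⁿ : n ≥ 0}` in `L²`. -/
def H2 : Submodule ℂ L2 :=
  (Submodule.span ℂ (Set.range fun n : ℕ => (fourierLp 2 (n : ℤ) : L2))).topologicalClosure

instance : CompleteSpace H2 :=
  IsClosed.completeSpace_coe (hs := Submodule.isClosed_topologicalClosure _)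

/-- The Riesz projection `P₊ : L² → H² ⊆ L²`. -/
def Pplus : L2 →L[ℂ] L2 := (H2.subtypeL).comp (H2.orthogonalProjectionOnto)

/-- `P₋ = I - P₊`. -/
def Pminus : L2 →L[ℂ] L2 := ContinuousLinearMap.id ℂ L2 - Pplus

/-- The GSIO defining relation `R x = P₊(f·P₊x) + P₋(g·P₊x) + P₊(φ·P₋x) + P₋(ψ·P₋x)`
at a point `x ∈ L²` (including the requirement that the four products lie in `L²`). -/
def gsioEq (R : L2 → L2) (f g φ ψ : 𝕋 → ℂ) (x : L2) : Prop :=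
  ∃ (h₁ : MemLp (f * ⇑(Pplus x)) 2 μ) (h₂ : MemLp (g * ⇑(Pplus x)) 2 μ)
    (h₃ : MemLp (φ * ⇑(Pminus x)) 2 μ) (h₄ : MemLp (ψ * ⇑(Pminus x)) 2 μ),
    R x = Pplus (h₁.toLp _) + Pminus (h₂.toLp _) + Pplus (h₃.toLp _) + Pminus (h₄.toLp _)

/-- `R` is the (bounded) generalized singular integral operator with
symbol matrix `(f, φ; g, ψ)`. -/
def IsGSIO (R : L2 →L[ℂ] L2) (f g φ ψ : 𝕋 → ℂ) : Prop := ∀ x : L2, gsioEq (⇑R) f g φ ψ x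

/-- Normalized reproducing kernel `k_z` of `H²`, as an element of `L²`. -/
def kern (z : ℂ) : L2 :=
  (Real.sqrt (1 - ‖z‖ ^ 2) : ℂ) • ∑' n : ℕ, (starRingEnd ℂ z) ^ n • (fourierLp 2 (n : ℤ) : L2)

/-- The unit vector `z̄k̄_z : w ↦ w̄ ⬝ conj (k_z w)` of `(H²)^⊥`, as an element of `L²`. -/
def kbar (z : ℂ) : L2 :=
  (Real.sqrt (1 - ‖z‖ ^ 2) : ℂ) • ∑' n : ℕ, z ^ n • (fourierLp 2 (-(n + 1) : ℤ) : L2)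

/-- `L∞(𝕋)`: essentially bounded (a.e. strongly measurable) functions. -/
def Linf : Set (𝕋 → ℂ) := {h | MemLp h ∞ μ}

/-- `C(𝕋)`: functions (a.e. equal to) continuous functions. -/
def CT : Set (𝕋 → ℂ) := {h | ∃ c : 𝕋 → ℂ, Continuous c ∧ h =ᵐ[μ] c}

/-- `H∞ = H² ∩ L∞`. -/
def Hinf : Set (𝕋 → ℂ) := {h | ∃ h2 : MemLp h 2 μ, h2.toLp h ∈ H2 ∧ MemLp h ∞ μ}

/-- `H∞ + C(𝕋)`. -/
def HinfC : Set (𝕋 → ℂ) := {h | ∃ a ∈ Hinf, ∃ c ∈ CT, h =ᵐ[μ] a + c}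

/-- The quasicontinuous functions `QC = (H∞ + C) ∩ conj (H∞ + C)`. -/
def QC : Set (𝕋 → ℂ) := {h | h ∈ HinfC ∧ star h ∈ HinfC}

/-- The set of GSIOs with all four symbols in `S`. -/
def gsioSet (S : Set (𝕋 → ℂ)) : Set (L2 →L[ℂ] L2) :=
  {R | ∃ f g φ ψ : 𝕋 → ℂ, f ∈ S ∧ g ∈ S ∧ φ ∈ S ∧ ψ ∈ S ∧ IsGSIO R f g φ ψ}

/-- The C*-algebra `𝔑_S` generated by the GSIOs with symbols in `S`. -/
def NAlg (S : Set (𝕋 → ℂ)) : StarSubalgebra ℂ (L2 →L[ℂ] L2) :=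
  (StarAlgebra.adjoin ℂ (gsioSet S)).topologicalClosure

/-- Generators `R_{H₁} R_{H₂} - R_K` of the semicommutator ideal. -/
def semiGen (S : Set (𝕋 → ℂ)) : Set (L2 →L[ℂ] L2) :=
  {T | ∃ f₁ g₁ φ₁ ψ₁ f₂ g₂ φ₂ ψ₂ g φ : 𝕋 → ℂ,
      f₁ ∈ S ∧ g₁ ∈ S ∧ φ₁ ∈ S ∧ ψ₁ ∈ S ∧ f₂ ∈ S ∧ g₂ ∈ S ∧ φ₂ ∈ S ∧ ψ₂ ∈ S ∧
      g ∈ S ∧ φ ∈ S ∧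
      ∃ R₁ R₂ RK : L2 →L[ℂ] L2, IsGSIO R₁ f₁ g₁ φ₁ ψ₁ ∧ IsGSIO R₂ f₂ g₂ φ₂ ψ₂ ∧
        IsGSIO RK (f₁ * f₂) g φ (ψ₁ * ψ₂) ∧ T = R₁ * R₂ - RK}

/-- The closed two-sided ideal `𝔖𝔑_S` of `𝔑_S` generated by the semicommutators. -/
def SemiIdeal (S : Set (𝕋 → ℂ)) : Set (L2 →L[ℂ] L2) :=
  closure (AddSubgroup.closure
    {T | ∃ a b t : L2 →L[ℂ] L2, a ∈ NAlg S ∧ b ∈ NAlg S ∧ t ∈ semiGen S ∧ T = a * t * b} :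
      Set (L2 →L[ℂ] L2))

/-- Fredholm: closed range and finite-dimensional kernel and cokernel. -/
def IsFredholm (T : L2 →L[ℂ] L2) : Prop :=
  FiniteDimensional ℂ (LinearMap.ker (T : L2 →ₗ[ℂ] L2)) ∧
  FiniteDimensional ℂ (L2 ⧸ LinearMap.range (T : L2 →ₗ[ℂ] L2)) ∧
  IsClosed (LinearMap.range (T : L2 →ₗ[ℂ] L2) : Set L2)

/-- Fredholm index `ind T = dim ker T - dim ker T*`. -/
def ind (T : L2 →L[ℂ] L2) : ℤ :=
  (Module.finrank ℂ (LinearMap.ker (T : L2 →ₗ[ℂ] L2)) : ℤ) -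
    (Module.finrank ℂ (LinearMap.ker (ContinuousLinearMap.adjoint T : L2 →ₗ[ℂ] L2)) : ℤ)

/-- Essential spectrum (spectrum in the Calkin algebra, via Atkinson's theorem). -/
def essSpectrum (T : L2 →L[ℂ] L2) : Set ℂ := {z | ¬ IsFredholm (T - z • 1)}

/-- Essential norm: distance to the compact operators. -/
def essNorm (T : L2 →L[ℂ] L2) : ℝ :=
  sInf ((fun K => ‖T + K‖) '' {K : L2 →L[ℂ] L2 | IsCompactOperator K})

/-- Essential range of a measurable function. -/
def essRange (f : 𝕋 → ℂ) : Set ℂ := {c | ∀ ε > 0, μ {t | dist (f t) c < ε} ≠ 0}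

/-- `a` has winding number `w` about the origin, via a continuous argument lift. -/
def HasWindingNumber (a : C(𝕋, ℂ)) (w : ℤ) : Prop :=
  ∃ θ : ℝ → ℝ, ContinuousOn θ (Set.Icc 0 (2 * Real.pi)) ∧
    (∀ t ∈ Set.Icc 0 (2 * Real.pi),
      a (t : 𝕋) = (‖a (t : 𝕋)‖ : ℂ) * Complex.exp (θ t * Complex.I)) ∧
    θ (2 * Real.pi) - θ 0 = 2 * Real.pi * w

/-- The constant function `1` in `L²`. -/
def one2 : L2 := MemLp.toLp (fun _ => (1 : ℂ)) (memLp_const 1)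

/-- The rank-one operator `1 ⊗ 1 : x ↦ ⟨x,1⟩·1`. -/
def oneProj : L2 →L[ℂ] L2 := (innerSL ℂ one2).smulRight one2

/-- The Hilbert transform `ℍ = P₊ - P₋ - 1⊗1`. -/
def hilbertT : L2 →L[ℂ] L2 := Pplus - Pminus - oneProj

/-- `BMO(𝕋) = L∞ + ℍ L∞`, as a subset of `L²`. -/
def BMO2 : Set L2 := {x | ∃ a b : L2, ⇑a ∈ Linf ∧ ⇑b ∈ Linf ∧ x = a + hilbertT b}

/-- `⋂_{p ≥ 1} L^p(𝕋)`. -/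
def Lfin : Set (𝕋 → ℂ) := {h | ∀ p : ℝ, 1 ≤ p → MemLp h (ENNReal.ofReal p) μ}

/-- The GSIO relation for a map defined on functions (rather than on `L²`). -/
def gsioEqF (R : (𝕋 → ℂ) → (𝕋 → ℂ)) (f g φ ψ : 𝕋 → ℂ) (x : 𝕋 → ℂ) : Prop :=
  ∃ (hx : MemLp x 2 μ)
    (h₁ : MemLp (f * ⇑(Pplus (hx.toLp x))) 2 μ) (h₂ : MemLp (g * ⇑(Pplus (hx.toLp x))) 2 μ)
    (h₃ : MemLp (φ * ⇑(Pminus (hx.toLp x))) 2 μ) (h₄ : MemLp (ψ * ⇑(Pminus (hx.toLp x))) 2 μ),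
    R x =ᵐ[μ] ⇑(Pplus (h₁.toLp _) + Pminus (h₂.toLp _) + Pplus (h₃.toLp _) + Pminus (h₄.toLp _))

/-- Distance in `L∞` from a function to `H∞`. -/
def distHinfF (a : 𝕋 → ℂ) : ℝ :=
  sInf {r : ℝ | ∃ h ∈ Hinf, r = (eLpNorm (a - h) ∞ μ).toReal}

end GSIO

namespace GSIO

/-- The radial-limit function of `T` along the reproducing kernels `k_{rξ}` is `f`:
`lim_{r→1⁻} ⟨T k_{rξ}, k_{rξ}⟩ = f ξ` for a.e. `ξ` (inner products in the Mathlib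
convention, conjugate-linear in the first variable). -/
def symbPlus (T : L2 → L2) (f : 𝕋 → ℂ) : Prop :=
  ∀ᵐ ξ ∂μ, Tendsto
    (fun r : ℝ => (inner ℂ (kern ((r : ℂ) * e ξ)) (T (kern ((r : ℂ) * e ξ))) : ℂ))
    (𝓝[<] (1 : ℝ)) (𝓝 (f ξ))

/-- The radial-limit function of `T` along the vectors `z̄k̄_{rξ}` is `ψ`:
`lim_{r→1⁻} ⟨T z̄k̄_{rξ}, z̄k̄_{rξ}⟩ = ψ ξ` for a.e. `ξ`. -/
def symbMinus (T : L2 → L2) (ψ : 𝕋 → ℂ) : Prop :=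
  ∀ᵐ ξ ∂μ, Tendsto
    (fun r : ℝ => (inner ℂ (kbar ((r : ℂ) * e ξ)) (T (kbar ((r : ℂ) * e ξ))) : ℂ))
    (𝓝[<] (1 : ℝ)) (𝓝 (ψ ξ))

/-- `ρ(T) = (f, ψ)`: the pair of radial-limit symbol functions of `T`, in `L∞ ⊕ L∞`. -/
def HasSymbol (T : L2 →L[ℂ] L2) (f ψ : 𝕋 → ℂ) : Prop :=
  f ∈ Linf ∧ ψ ∈ Linf ∧ symbPlus (⇑T) f ∧ symbMinus (⇑T) ψ

end GSIO

/-!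
Everything is read off Fourier coefficients. On `x ∈ H²` the operator reduces to
`P₊(f x) + P₋(g x)`, a sum of two orthogonal vectors, so `R zᵐ = 0` for `m ≥ 0` says that
`f̂` vanishes on `[-m, ∞)` and `ĝ` on `(-∞, -m)`; letting `m` vary gives `f = 0` and `g ∈ H²`.
Testing on `zᵐ` with `m < 0` gives `ψ = 0` and `φ̂ = 0` on `[1, ∞)` in the same way.
Conversely, the coefficients of a product are the convolution of the coefficients of the
factors, so `g · H² ⊆ H²` and `φ · (H²)ᗮ ⊆ (H²)ᗮ`, which kills the two remaining terms.
-/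

open scoped InnerProductSpace ComplexConjugate

theorem MeasureTheory.MemLp.toLp_eq_zero_iff {α E : Type*} {m : MeasurableSpace α}
    {μ : Measure α} [NormedAddCommGroup E] {p : ℝ≥0∞} {f : α → E} (hf : MemLp f p μ) :
    hf.toLp f = 0 ↔ f =ᵐ[μ] 0 := by
  rw [Lp.eq_zero_iff_ae_eq_zero]
  exact ⟨hf.coeFn_toLp.symm.trans, hf.coeFn_toLp.trans⟩

section ToLpMul

variable {α R : Type*} {m : MeasurableSpace α} {μ : Measure α} [NonUnitalNormedRing R]
  {p : ℝ≥0∞} {a b : α → R} (h : MemLp (a * b) p μ)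

theorem MeasureTheory.MemLp.toLp_mul_eq_zero_of_left (ha : a =ᵐ[μ] 0) : h.toLp _ = 0 :=
  h.toLp_eq_zero_iff.2 (by filter_upwards [ha] with t ht; simp [ht])

theorem MeasureTheory.MemLp.toLp_mul_eq_zero_of_right (hb : b =ᵐ[μ] 0) : h.toLp _ = 0 :=
  h.toLp_eq_zero_iff.2 (by filter_upwards [hb] with t ht; simp [ht])

end ToLpMul

namespace HilbertBasis

variable {ι 𝕜 E : Type*} [RCLike 𝕜] [NormedAddCommGroup E] [InnerProductSpace 𝕜 E]
  (b : HilbertBasis ι 𝕜 E) {s : Set ι} {x : E}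

theorem mem_orthogonal_span_image_iff :
    x ∈ (Submodule.span 𝕜 (b '' s))ᗮ ↔ ∀ i ∈ s, b.repr x i = 0 := by
  simp only [Submodule.mem_orthogonal, b.repr_apply_apply]
  refine ⟨fun h i hi => h _ (Submodule.subset_span ⟨i, hi, rfl⟩), fun h u hu => ?_⟩
  induction hu using Submodule.span_induction with
  | mem _ hv => obtain ⟨i, hi, rfl⟩ := hv; exact h i hi
  | zero => exact inner_zero_left x
  | add _ _ _ _ hu hv => rw [inner_add_left, hu, hv, add_zero]
  | smul c _ _ hu => rw [inner_smul_left, hu, mul_zero]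

theorem mem_topologicalClosure_span_image_iff :
    x ∈ (Submodule.span 𝕜 (b '' s)).topologicalClosure ↔ ∀ i ∉ s, b.repr x i = 0 := by
  constructor
  · intro hx
    have hle : (Submodule.span 𝕜 (b '' s)).topologicalClosure ≤
        (Submodule.span 𝕜 (b '' sᶜ))ᗮ := by
      refine Submodule.topologicalClosure_minimal _ ?_ (Submodule.isClosed_orthogonal _)
      rw [Submodule.span_le]
      rintro _ ⟨j, hj, rfl⟩
      classical
      refine b.mem_orthogonal_span_image_iff.2 fun i hi => ?_
      have hij : i ≠ j := by rintro rfl; exact hi hj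
      simp [b.repr_self, lp.single_apply, hij]
    exact b.mem_orthogonal_span_image_iff.1 (hle hx)
  · intro h
    refine (Submodule.isClosed_topologicalClosure _).mem_of_tendsto (b.hasSum_repr x)
      (.of_forall fun t => Submodule.sum_mem _ fun i _ => ?_)
    by_cases hi : i ∈ s
    · exact Submodule.le_topologicalClosure _
        (Submodule.smul_mem _ _ (Submodule.subset_span ⟨i, hi, rfl⟩))
    · simp [h i hi]

end HilbertBasis

section Fourier

variable {T : ℝ} [Fact (0 < T)]

theorem memLp_fourier (k : ℤ) : MemLp (⇑(fourier k)) ∞ (haarAddCircle (T := T)) :=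
  (fourier k).continuous.memLp_top_of_hasCompactSupport (HasCompactSupport.of_compactSpace _) _

theorem MeasureTheory.MemLp.fourierCoeff_toLp {a : AddCircle T → ℂ} {p : ℝ≥0∞}
    (ha : MemLp a p AddCircle.haarAddCircle) : fourierCoeff ⇑(ha.toLp a) = fourierCoeff a :=
  fourierCoeff_congr_ae ha.coeFn_toLp

theorem ae_eq_zero_of_fourierCoeff_eq_zero {a : AddCircle T → ℂ}
    (ha : MemLp a 2 haarAddCircle) (h : ∀ n, fourierCoeff a n = 0) : a =ᵐ[haarAddCircle] 0 := by
  have : fourierBasis.repr (ha.toLp a) = 0 := by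
    ext n
    simp [fourierBasis_repr, ha.fourierCoeff_toLp, h]
  rwa [LinearIsometryEquiv.map_eq_zero_iff, ha.toLp_eq_zero_iff] at this

theorem fourierCoeff_star (a : AddCircle T → ℂ) (n : ℤ) :
    fourierCoeff (star a) n = conj (fourierCoeff a (-n)) := by
  simp only [fourierCoeff, ← integral_conj, smul_eq_mul, map_mul, Pi.star_apply, neg_neg,
    fourier_neg, RCLike.star_def]

theorem fourierCoeff_mul_fourier (a : AddCircle T → ℂ) (m n : ℤ) :
    fourierCoeff (a * ⇑(fourier m)) n = fourierCoeff a (n - m) := by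
  refine integral_congr_ae (.of_forall fun t => ?_)
  simp only [Pi.mul_apply, smul_eq_mul]
  rw [neg_sub, sub_eq_add_neg, add_comm, fourier_add]
  ring

theorem fourierCoeff_toLp_mul_fourierLp {a : AddCircle T → ℂ} {m : ℤ}
    (h : MemLp (a * ⇑(fourierLp 2 m)) 2 haarAddCircle) (n : ℤ) :
    fourierCoeff ⇑(h.toLp _) n = fourierCoeff a (n - m) := by
  rw [h.fourierCoeff_toLp, fourierCoeff_congr_ae ((EventuallyEq.refl _ a).mul
    (coeFn_fourierLp 2 m)), fourierCoeff_mul_fourier]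

/-- Parseval's identity for `fourier k * star a` and `b`. -/
theorem fourierCoeff_mul {a b : AddCircle T → ℂ} (ha : MemLp a 2 haarAddCircle)
    (hb : MemLp b 2 haarAddCircle) (k : ℤ) :
    fourierCoeff (a * b) k = ∑' n, fourierCoeff a (k - n) * fourierCoeff b n := by
  have hw : MemLp (⇑(fourier k) * star a) 2 haarAddCircle := ha.star.mul (memLp_fourier k)
  have hcoeff (n : ℤ) :
      fourierCoeff (⇑(fourier k) * star a) n = conj (fourierCoeff a (k - n)) := by
    rw [mul_comm, fourierCoeff_mul_fourier, fourierCoeff_star, neg_sub]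
  have hinner : ⟪hw.toLp _, hb.toLp b⟫_ℂ = fourierCoeff (a * b) k := by
    rw [L2.inner_def]
    refine integral_congr_ae ?_
    filter_upwards [hw.coeFn_toLp, hb.coeFn_toLp] with t hwt hbt
    simp [hwt, hbt]
    ring
  rw [← hinner, ← fourierBasis.tsum_inner_mul_inner]
  congr 1 with n
  rw [← inner_conj_symm, ← HilbertBasis.repr_apply_apply, ← HilbertBasis.repr_apply_apply,
    fourierBasis_repr, fourierBasis_repr, hw.fourierCoeff_toLp, hb.fourierCoeff_toLp, hcoeff,
    RCLike.conj_conj]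

end Fourier

namespace GSIO

theorem H2_eq_topologicalClosure_span_image :
    H2 = (Submodule.span ℂ (fourierBasis '' Set.Ici 0)).topologicalClosure := by
  rw [H2, coe_fourierBasis]
  congr
  ext x
  constructor
  · rintro ⟨n, rfl⟩
    exact ⟨n, Int.natCast_nonneg n, rfl⟩
  · rintro ⟨n, hn, rfl⟩
    exact ⟨n.toNat, congrArg _ (Int.toNat_of_nonneg hn)⟩

theorem mem_H2_iff {x : L2} : x ∈ H2 ↔ ∀ n < 0, fourierCoeff x n = 0 := by
  rw [H2_eq_topologicalClosure_span_image, HilbertBasis.mem_topologicalClosure_span_image_iff]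
  simp only [fourierBasis_repr, Set.mem_Ici, not_le]

theorem mem_H2_orthogonal_iff {x : L2} :
    x ∈ H2ᗮ ↔ ∀ n ≥ 0, fourierCoeff x n = 0 := by
  rw [H2_eq_topologicalClosure_span_image, Submodule.orthogonal_closure,
    HilbertBasis.mem_orthogonal_span_image_iff]
  simp only [fourierBasis_repr, Set.mem_Ici]

theorem fourierLp_mem_H2 {m : ℤ} (hm : 0 ≤ m) : (fourierLp 2 m : L2) ∈ H2 := by
  rw [mem_H2_iff]
  intro n hn
  rw [fourierCoeff_congr_ae (coeFn_fourierLp 2 m), fourierCoeff_fourier,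
    Pi.single_eq_of_ne (by omega)]

theorem fourierLp_mem_H2_orthogonal {m : ℤ} (hm : m < 0) : (fourierLp 2 m : L2) ∈ H2ᗮ := by
  rw [mem_H2_orthogonal_iff]
  intro n hn
  rw [fourierCoeff_congr_ae (coeFn_fourierLp 2 m), fourierCoeff_fourier,
    Pi.single_eq_of_ne (by omega)]

theorem pplus_apply_mem (x : L2) : Pplus x ∈ H2 := H2.starProjection_apply_mem x

theorem pminus_eq_starProjection : Pminus = H2ᗮ.starProjection :=
  (H2.starProjection_orthogonal).symm

theorem pminus_apply_mem (x : L2) : Pminus x ∈ H2ᗮ := by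
  rw [pminus_eq_starProjection]
  exact H2ᗮ.starProjection_apply_mem x

theorem pplus_apply_eq_zero_iff {x : L2} : Pplus x = 0 ↔ x ∈ H2ᗮ :=
  H2.starProjection_apply_eq_zero_iff

theorem pminus_apply_eq_zero_iff {x : L2} : Pminus x = 0 ↔ x ∈ H2 := by
  rw [pminus_eq_starProjection, H2ᗮ.starProjection_apply_eq_zero_iff,
    Submodule.orthogonal_orthogonal]

theorem pplus_apply_eq_self {x : L2} (hx : x ∈ H2) : Pplus x = x :=
  Submodule.starProjection_eq_self_iff.2 hx

theorem pminus_apply_eq_self {x : L2} (hx : x ∈ H2ᗮ) : Pminus x = x := by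
  rw [pminus_eq_starProjection]
  exact H2ᗮ.starProjection_eq_self_iff.2 hx

theorem pplus_add_pminus_eq_zero_iff {x y : L2} :
    Pplus x + Pminus y = 0 ↔ x ∈ H2ᗮ ∧ y ∈ H2 := by
  rw [← pplus_apply_eq_zero_iff, ← pminus_apply_eq_zero_iff]
  refine ⟨fun h => ?_, fun h => by rw [h.1, h.2, add_zero]⟩
  have hx : Pplus x = 0 := by
    refine Submodule.disjoint_def.1 H2.orthogonal_disjoint _ (pplus_apply_mem x) ?_
    rw [eq_neg_of_add_eq_zero_left h]
    exact neg_mem (pminus_apply_mem y)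
  exact ⟨hx, by rwa [hx, zero_add] at h⟩

theorem toLp_mul_mem_H2 {a : 𝕋 → ℂ} (ha : MemLp a 2 μ) (haH : ha.toLp a ∈ H2) {x : L2}
    (hx : x ∈ H2) (h : MemLp (a * ⇑x) 2 μ) : h.toLp _ ∈ H2 := by
  rw [mem_H2_iff, ha.fourierCoeff_toLp] at haH
  rw [mem_H2_iff] at hx ⊢
  intro k hk
  have hterm : ∀ n, fourierCoeff a (k - n) * fourierCoeff x n = 0 := fun n => by
    rcases lt_or_ge n 0 with hn | hn
    · rw [hx n hn, mul_zero]
    · rw [haH _ (by omega), zero_mul]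
  simp [h.fourierCoeff_toLp, fourierCoeff_mul ha (Lp.memLp x), hterm]

theorem toLp_mul_mem_H2_orthogonal {a : 𝕋 → ℂ} (ha : MemLp a 2 μ)
    (haH : ha.star.toLp (star a) ∈ H2) {x : L2} (hx : x ∈ H2ᗮ) (h : MemLp (a * ⇑x) 2 μ) :
    h.toLp _ ∈ H2ᗮ := by
  rw [mem_H2_iff, ha.star.fourierCoeff_toLp] at haH
  rw [mem_H2_orthogonal_iff] at hx ⊢
  intro k hk
  have hterm : ∀ n, fourierCoeff a (k - n) * fourierCoeff x n = 0 := fun n => by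
    rcases lt_or_ge n 0 with hn | hn
    · have := haH (n - k) (by omega)
      rw [fourierCoeff_star, neg_sub, map_eq_zero] at this
      rw [this, zero_mul]
    · rw [hx n hn, mul_zero]
  simp [h.fourierCoeff_toLp, fourierCoeff_mul ha (Lp.memLp x), hterm]

namespace IsGSIO

variable {R : L2 →L[ℂ] L2} {f g φ ψ : 𝕋 → ℂ}

theorem apply_of_mem_H2 (hR : IsGSIO R f g φ ψ) {x : L2} (hx : x ∈ H2) :
    ∃ (h₁ : MemLp (f * ⇑x) 2 μ) (h₂ : MemLp (g * ⇑x) 2 μ),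
      R x = Pplus (h₁.toLp _) + Pminus (h₂.toLp _) := by
  obtain ⟨h₁, h₂, h₃, h₄, hRx⟩ := hR x
  have hx' : ⇑(Pminus x) =ᵐ[μ] 0 := by
    rw [pminus_apply_eq_zero_iff.2 hx]
    exact Lp.coeFn_zero _ _ _
  rw [h₃.toLp_mul_eq_zero_of_right hx', h₄.toLp_mul_eq_zero_of_right hx',
    map_zero, map_zero, add_zero, add_zero] at hRx
  revert h₁ h₂
  rw [pplus_apply_eq_self hx]
  exact fun h₁ h₂ hRx => ⟨h₁, h₂, hRx⟩

theorem apply_of_mem_H2_orthogonal (hR : IsGSIO R f g φ ψ) {x : L2} (hx : x ∈ H2ᗮ) :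
    ∃ (h₃ : MemLp (φ * ⇑x) 2 μ) (h₄ : MemLp (ψ * ⇑x) 2 μ),
      R x = Pplus (h₃.toLp _) + Pminus (h₄.toLp _) := by
  obtain ⟨h₁, h₂, h₃, h₄, hRx⟩ := hR x
  have hx' : ⇑(Pplus x) =ᵐ[μ] 0 := by
    rw [pplus_apply_eq_zero_iff.2 hx]
    exact Lp.coeFn_zero _ _ _
  rw [h₁.toLp_mul_eq_zero_of_right hx', h₂.toLp_mul_eq_zero_of_right hx',
    map_zero, map_zero, zero_add, zero_add] at hRx
  revert h₃ h₄
  rw [pminus_apply_eq_self hx]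
  exact fun h₃ h₄ hRx => ⟨h₃, h₄, hRx⟩

theorem fourierCoeff_eq_zero_of_apply_fourierLp_of_nonneg (hR : IsGSIO R f g φ ψ)
    {m : ℤ} (hm : 0 ≤ m) (h : R (fourierLp 2 m) = 0) :
    (∀ n ≥ 0, fourierCoeff f (n - m) = 0) ∧ ∀ n < 0, fourierCoeff g (n - m) = 0 := by
  obtain ⟨h₁, h₂, hRx⟩ := hR.apply_of_mem_H2 (fourierLp_mem_H2 hm)
  rw [h, eq_comm, pplus_add_pminus_eq_zero_iff, mem_H2_orthogonal_iff, mem_H2_iff] at hRx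
  simpa only [fourierCoeff_toLp_mul_fourierLp] using hRx

theorem fourierCoeff_eq_zero_of_apply_fourierLp_of_neg (hR : IsGSIO R f g φ ψ)
    {m : ℤ} (hm : m < 0) (h : R (fourierLp 2 m) = 0) :
    (∀ n ≥ 0, fourierCoeff φ (n - m) = 0) ∧ ∀ n < 0, fourierCoeff ψ (n - m) = 0 := by
  obtain ⟨h₃, h₄, hRx⟩ :=
    hR.apply_of_mem_H2_orthogonal (fourierLp_mem_H2_orthogonal hm)
  rw [h, eq_comm, pplus_add_pminus_eq_zero_iff, mem_H2_orthogonal_iff, mem_H2_iff] at hRx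
  simpa only [fourierCoeff_toLp_mul_fourierLp] using hRx

end IsGSIO

/-- If `R_H` is bounded with symbols in `L²(𝕋)`, then `R_H = 0` iff
`f = 0`, `ψ = 0`, and both `g` and `φ̄` belong to `H²`. -/
theorem gsio_eq_zero_iff (f g φ ψ : 𝕋 → ℂ)
    (hf : MemLp f 2 μ) (hg : MemLp g 2 μ) (hφ : MemLp φ 2 μ) (hψ : MemLp ψ 2 μ)
    (R : L2 →L[ℂ] L2) (hR : IsGSIO R f g φ ψ) :
    R = 0 ↔ (f =ᵐ[μ] 0 ∧ ψ =ᵐ[μ] 0 ∧ hg.toLp g ∈ H2 ∧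
      ∃ hc : MemLp (star φ) 2 μ, hc.toLp (star φ) ∈ H2) := by
  constructor
  · intro h0
    have hfg := fun m (hm : 0 ≤ m) =>
      hR.fourierCoeff_eq_zero_of_apply_fourierLp_of_nonneg hm (by simp [h0])
    have hφψ := fun m (hm : m < 0) =>
      hR.fourierCoeff_eq_zero_of_apply_fourierLp_of_neg hm (by simp [h0])
    refine ⟨ae_eq_zero_of_fourierCoeff_eq_zero hf fun k => ?_,
      ae_eq_zero_of_fourierCoeff_eq_zero hψ fun k => ?_, mem_H2_iff.2 fun n hn => ?_,
      hφ.star, mem_H2_iff.2 fun n hn => ?_⟩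
    · simpa using (hfg (max 0 (-k)) (le_max_left _ _)).1 (k + max 0 (-k)) (by omega)
    · simpa using (hφψ (min (-1) (k - 1) - k) (by omega)).2 (min (-1) (k - 1)) (by omega)
    · simpa [hg.fourierCoeff_toLp] using (hfg 0 le_rfl).2 n hn
    · simpa [hφ.star.fourierCoeff_toLp, fourierCoeff_star] using
        (hφψ (-1) (by norm_num)).1 (-n - 1) (by omega)
  · rintro ⟨hf0, hψ0, hgH, _, hφH⟩
    ext x
    obtain ⟨h₁, h₂, h₃, h₄, hRx⟩ := hR x
    have hgx := pminus_apply_eq_zero_iff.2 (toLp_mul_mem_H2 hg hgH (pplus_apply_mem x) h₂)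
    have hφx := pplus_apply_eq_zero_iff.2
      (toLp_mul_mem_H2_orthogonal hφ hφH (pminus_apply_mem x) h₃)
    rw [hRx, h₁.toLp_mul_eq_zero_of_left hf0, h₄.toLp_mul_eq_zero_of_left hψ0, hgx, hφx]
    simp

end GSIO
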